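/- arXiv:2108.06120 — 6 statements merged into one kernel-verified Lean document; each statement's English description precedes it below -/
import Mathlib

section
/- (Lemma 1, second part) In the IRS-aided wireless-powered MEC system with NOMA offloading, allowing a different IRS beamforming vector in each of the K offloading sub-slots does not improve the optimal computation rate over a single common offloading beamforming vector: R_NOMA^2 = R_NOMA^3. -/
open Finset

/-- Effective channel power gain of device `k` under IRS beamforming vector `v`. -/
noncomputable def gain {K N : ℕ} (h : Fin K → ℂ) (q : Fin K → Fin N → ℂ)
    (k : Fin K) (v : Fin N → ℂ) : ℝ :=
  ‖(starRingEnd ℂ) (h k) + ∑ n, (starRingEnd ℂ) (q k n) * v n‖ ^ 2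

/-- Optimal computation rate of NOMA offloading with separate IRS beamforming vectors for
DL WPT and UL offloading (Case 2). -/
noncomputable def RNOMA2 {K N : ℕ} (h : Fin K → ℂ) (q : Fin K → Fin N → ℂ)
    (B T C γ η P σ2 : ℝ) : ℝ :=
  sSup {r : ℝ | ∃ (v₀ v₁ : Fin N → ℂ) (τ₀ τ₁ : ℝ) (p f : Fin K → ℝ),
    (∀ n, ‖v₀ n‖ = 1) ∧ (∀ n, ‖v₁ n‖ = 1) ∧ 0 ≤ τ₀ ∧ 0 ≤ τ₁ ∧
    (∀ k, 0 ≤ p k) ∧ (∀ k, 0 ≤ f k) ∧ τ₀ + τ₁ ≤ T ∧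
    (∀ k, τ₁ * p k + T * γ * f k ^ 3 ≤ τ₀ * η * P * gain h q k v₀) ∧
    r = B * τ₁ * Real.logb 2 (1 + (∑ k, p k * gain h q k v₁) / σ2) + ∑ k, T * f k / C}

/-- Optimal computation rate of NOMA offloading with a possibly different IRS beamforming
vector in each of the `K` offloading sub-slots (Case 3). -/
noncomputable def RNOMA3 {K N : ℕ} (h : Fin K → ℂ) (q : Fin K → Fin N → ℂ)
    (B T C γ η P σ2 : ℝ) : ℝ :=
  sSup {r : ℝ | ∃ (v₀ : Fin N → ℂ) (w : Fin K → Fin N → ℂ) (τ₀ : ℝ)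
    (τ₁ : Fin K → ℝ) (p f : Fin K → ℝ),
    (∀ n, ‖v₀ n‖ = 1) ∧ (∀ i n, ‖w i n‖ = 1) ∧ 0 ≤ τ₀ ∧
    (∀ i, 0 ≤ τ₁ i) ∧ (∀ k, 0 ≤ p k) ∧ (∀ k, 0 ≤ f k) ∧ τ₀ + ∑ i, τ₁ i ≤ T ∧
    (∀ k, (∑ i, τ₁ i) * p k + T * γ * f k ^ 3 ≤ τ₀ * η * P * gain h q k v₀) ∧
    r = B * ∑ i, τ₁ i * Real.logb 2 (1 + (∑ k, p k * gain h q k (w i)) / σ2)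
        + ∑ k, T * f k / C}

/-!
A Case-2 schedule is the Case-3 schedule that puts all offloading time into one sub-slot.
Conversely, the Case-3 objective is a time-weighted sum of the sub-slot rates, so it does not
decrease when the whole offloading time is given to the sub-slot with the largest rate and its
beamforming vector; the energy constraints only see the total offloading time.
-/

theorem Fintype.exists_sum_mul_le_sum_mul {ι : Type*} [Fintype ι] [Nonempty ι]
    {τ : ι → ℝ} (hτ : ∀ i, 0 ≤ τ i) (L : ι → ℝ) :
    ∃ j, ∑ i, τ i * L i ≤ (∑ i, τ i) * L j := by
  obtain ⟨j, hj⟩ := Finite.exists_max L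
  refine ⟨j, ?_⟩
  rw [Finset.sum_mul]
  exact Finset.sum_le_sum fun i _ => mul_le_mul_of_nonneg_left (hj i) (hτ i)

section Rates

variable {K N : ℕ} (h : Fin K → ℂ) (q : Fin K → Fin N → ℂ) (B T C γ η P σ2 : ℝ)

def noma2Rates : Set ℝ :=
  {r : ℝ | ∃ (v₀ v₁ : Fin N → ℂ) (τ₀ τ₁ : ℝ) (p f : Fin K → ℝ),
    (∀ n, ‖v₀ n‖ = 1) ∧ (∀ n, ‖v₁ n‖ = 1) ∧ 0 ≤ τ₀ ∧ 0 ≤ τ₁ ∧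
    (∀ k, 0 ≤ p k) ∧ (∀ k, 0 ≤ f k) ∧ τ₀ + τ₁ ≤ T ∧
    (∀ k, τ₁ * p k + T * γ * f k ^ 3 ≤ τ₀ * η * P * gain h q k v₀) ∧
    r = B * τ₁ * Real.logb 2 (1 + (∑ k, p k * gain h q k v₁) / σ2) + ∑ k, T * f k / C}

def noma3Rates : Set ℝ :=
  {r : ℝ | ∃ (v₀ : Fin N → ℂ) (w : Fin K → Fin N → ℂ) (τ₀ : ℝ)
    (τ₁ : Fin K → ℝ) (p f : Fin K → ℝ),
    (∀ n, ‖v₀ n‖ = 1) ∧ (∀ i n, ‖w i n‖ = 1) ∧ 0 ≤ τ₀ ∧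
    (∀ i, 0 ≤ τ₁ i) ∧ (∀ k, 0 ≤ p k) ∧ (∀ k, 0 ≤ f k) ∧ τ₀ + ∑ i, τ₁ i ≤ T ∧
    (∀ k, (∑ i, τ₁ i) * p k + T * γ * f k ^ 3 ≤ τ₀ * η * P * gain h q k v₀) ∧
    r = B * ∑ i, τ₁ i * Real.logb 2 (1 + (∑ k, p k * gain h q k (w i)) / σ2)
        + ∑ k, T * f k / C}

theorem noma2Rates_subset_noma3Rates [NeZero K] :
    noma2Rates h q B T C γ η P σ2 ⊆ noma3Rates h q B T C γ η P σ2 := by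
  rintro r ⟨v₀, v₁, τ₀, τ₁, p, f, hv₀, hv₁, hτ₀, hτ₁, hp, hf, htime, henergy, rfl⟩
  have hsingle : ∑ i, Pi.single (0 : Fin K) τ₁ i = τ₁ := Fintype.sum_pi_single' 0 τ₁
  refine ⟨v₀, fun _ => v₁, τ₀, Pi.single 0 τ₁, p, f, hv₀, fun _ => hv₁, hτ₀,
    (Pi.single_nonneg.2 hτ₁ : (0 : Fin K → ℝ) ≤ Pi.single 0 τ₁), hp, hf,
    by rwa [hsingle], by rwa [hsingle], ?_⟩
  simp only [Pi.single_apply, ite_mul, zero_mul, Finset.sum_ite_eq', Finset.mem_univ, if_true]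
  ring

theorem exists_noma2Rate_ge_of_mem_noma3Rates [NeZero K] (hB : 0 ≤ B) {r : ℝ}
    (hr : r ∈ noma3Rates h q B T C γ η P σ2) :
    ∃ r' ∈ noma2Rates h q B T C γ η P σ2, r ≤ r' := by
  obtain ⟨v₀, w, τ₀, τ₁, p, f, hv₀, hw, hτ₀, hτ₁, hp, hf, htime, henergy, rfl⟩ := hr
  obtain ⟨j, hj⟩ := Fintype.exists_sum_mul_le_sum_mul hτ₁
    fun i => Real.logb 2 (1 + (∑ k, p k * gain h q k (w i)) / σ2)
  refine ⟨_, ⟨v₀, w j, τ₀, ∑ i, τ₁ i, p, f, hv₀, hw j, hτ₀,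
    Finset.sum_nonneg fun i _ => hτ₁ i, hp, hf, htime, henergy, rfl⟩, ?_⟩
  rw [mul_assoc]
  gcongr

end Rates

theorem RNOMA2_eq_RNOMA3_general {K N : ℕ} (hK : 1 ≤ K)
    (h : Fin K → ℂ) (q : Fin K → Fin N → ℂ) (B T C γ η P σ2 : ℝ)
    (hB : 0 < B) :
    RNOMA2 h q B T C γ η P σ2 = RNOMA3 h q B T C γ η P σ2 := by
  have : NeZero K := ⟨by omega⟩
  exact csSup_eq_csSup_of_forall_exists_le
    (fun r hr => ⟨r, noma2Rates_subset_noma3Rates h q B T C γ η P σ2 hr, le_rfl⟩)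
    (fun r hr => exists_noma2Rate_ge_of_mem_noma3Rates h q B T C γ η P σ2 hB.le hr)

/-- Lemma 1 (second part): `R_NOMA^{case2} = R_NOMA^{case3}`. -/
theorem RNOMA2_eq_RNOMA3 {K N : ℕ} (hK : 1 ≤ K) (hN : 1 ≤ N)
    (h : Fin K → ℂ) (q : Fin K → Fin N → ℂ) (B T C γ η P σ2 : ℝ)
    (hB : 0 < B) (hT : 0 < T) (hC : 0 < C) (hγ : 0 < γ)
    (hη : 0 < η) (hP : 0 < P) (hσ : 0 < σ2) :
    RNOMA2 h q B T C γ η P σ2 = RNOMA3 h q B T C γ η P σ2 :=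
  RNOMA2_eq_RNOMA3_general hK h q B T C γ η P σ2 hB
end

section
/- (Existence and uniqueness of the root p* in Proposition 1) Let σ², η, P, h > 0 and define G(p) = log₂(1 + p·h/σ²) − p·h/((σ² + p·h)·ln 2) − η·P·h²/((σ² + p·h)·ln 2) for p ≥ 0. Then G is strictly increasing on [0, ∞), G(0) = −η·P·h²/(σ²·ln 2) < 0, G(p) → ∞ as p → ∞, and there exists a unique p* > 0 with G(p*) = 0. -/
/-!
Write `s = σ² + p·h ≥ σ²` and `K = η·P·h²`. Then
`G(p) = (log s + (σ² - K)/s - log σ² - 1) / ln 2`, and `s ↦ log s + c/s` is strictly increasing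
for `s ≥ c` (its derivative is `(s - c)/s²`); here `c = σ² - K ≤ σ² ≤ s`. As `p → ∞` the term `log s`
tends to infinity while `c/s → 0`. Since `G(0) < 0`, the intermediate value theorem and strict
monotonicity give exactly one positive root.
-/

open Filter Real Set

theorem strictMonoOn_log_add_div {a c : ℝ} (ha : 0 < a) (hca : c ≤ a) :
    StrictMonoOn (fun s => log s + c / s) (Ici a) := by
  intro s hs t ht hst
  have hs0 : 0 < s := ha.trans_le hs
  have ht0 : 0 < t := hs0.trans hst
  have hlog : log s - log t < s / t - 1 := by
    rw [← log_div hs0.ne' ht0.ne']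
    exact log_lt_sub_one_of_pos (div_pos hs0 ht0) ((div_lt_one ht0).mpr hst).ne
  have hgap : 1 - s / t - (c / s - c / t) = (t - s) * (s - c) / (s * t) := by
    field_simp
  have : 0 ≤ (t - s) * (s - c) / (s * t) :=
    div_nonneg (mul_nonneg (sub_nonneg.mpr hst.le) (sub_nonneg.mpr (hca.trans hs))) (by positivity)
  linarith

theorem existsUnique_root_of_strictMonoOn {f : ℝ → ℝ} {a : ℝ} (hmono : StrictMonoOn f (Ici a))
    (hcont : ContinuousOn f (Ici a)) (ha : f a < 0) (htop : Tendsto f atTop atTop) :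
    ∃! x, a < x ∧ f x = 0 := by
  obtain ⟨b, hb, hab⟩ := ((htop.eventually_ge_atTop 0).and (eventually_ge_atTop a)).exists
  obtain ⟨x, hx, hfx⟩ := intermediate_value_Icc hab (hcont.mono Icc_subset_Ici_self) ⟨ha.le, hb⟩
  have hax : a < x := hx.1.lt_of_ne (by rintro rfl; linarith)
  refine ⟨x, ⟨hax, hfx⟩, fun y ⟨hay, hfy⟩ => ?_⟩
  exact hmono.injOn (mem_Ici.mpr hay.le) (mem_Ici.mpr hax.le) (hfy.trans hfx.symm)

namespace WPMEC

/-- Equation (18) of the paper, with `σ2` standing for `σ²`. -/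
noncomputable def G (σ2 η P h p : ℝ) : ℝ :=
  logb 2 (1 + p * h / σ2) - p * h / ((σ2 + p * h) * log 2)
    - η * P * h ^ 2 / ((σ2 + p * h) * log 2)

variable {σ2 η P h p : ℝ}

theorem G_eq (hσ : σ2 ≠ 0) (hs : σ2 + p * h ≠ 0) :
    G σ2 η P h p =
      (log (σ2 + p * h) + (σ2 - η * P * h ^ 2) / (σ2 + p * h) - log σ2 - 1) / log 2 := by
  rw [G, logb, show 1 + p * h / σ2 = (σ2 + p * h) / σ2 by field_simp, log_div hs hσ]
  field_simp
  ring

theorem G_zero : G σ2 η P h 0 = -(η * P * h ^ 2 / (σ2 * log 2)) := by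
  simp [G]

theorem G_strictMonoOn (hσ : 0 < σ2) (hh : 0 < h) (hηP : 0 ≤ η * P) :
    StrictMonoOn (G σ2 η P h) (Ici 0) := by
  intro p hp q hq hpq
  have hp' : σ2 ≤ σ2 + p * h := le_add_of_nonneg_right (mul_nonneg hp hh.le)
  have hq' : σ2 ≤ σ2 + q * h := le_add_of_nonneg_right (mul_nonneg (mem_Ici.mp hq) hh.le)
  rw [G_eq hσ.ne' (hσ.trans_le hp').ne', G_eq hσ.ne' (hσ.trans_le hq').ne']
  refine div_lt_div_of_pos_right ?_ (log_pos one_lt_two)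
  have := strictMonoOn_log_add_div hσ (sub_le_self σ2 (by positivity : 0 ≤ η * P * h ^ 2))
    hp' hq' (by gcongr)
  simp only at this
  linarith

theorem continuousOn_G (hσ : 0 < σ2) (hh : 0 < h) : ContinuousOn (G σ2 η P h) (Ici 0) := by
  have hs : ∀ p ∈ Ici (0 : ℝ), σ2 + p * h ≠ 0 := fun p hp => by
    have := mul_nonneg (mem_Ici.mp hp) hh.le; positivity
  refine ContinuousOn.congr (f := fun p =>
    (log (σ2 + p * h) + (σ2 - η * P * h ^ 2) / (σ2 + p * h) - log σ2 - 1) / log 2) ?_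
    fun p hp => G_eq hσ.ne' (hs p hp)
  fun_prop (disch := assumption)

theorem tendsto_G_atTop (hσ : 0 < σ2) (hh : 0 < h) : Tendsto (G σ2 η P h) atTop atTop := by
  have hs : Tendsto (fun p => σ2 + p * h) atTop atTop :=
    tendsto_atTop_add_const_left _ σ2 (tendsto_id.atTop_mul_const hh)
  have hφ : Tendsto (fun p => log (σ2 + p * h) + (σ2 - η * P * h ^ 2) / (σ2 + p * h)) atTop atTop :=
    (tendsto_log_atTop.comp hs).atTop_add (tendsto_const_nhds.div_atTop hs)
  refine Tendsto.congr' ?_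
    ((tendsto_atTop_add_const_right _ (-log σ2 - 1) hφ).atTop_div_const (log_pos one_lt_two))
  filter_upwards [eventually_ge_atTop 0] with p hp
  rw [G_eq hσ.ne' (by positivity)]
  ring

end WPMEC

/-- Existence and uniqueness of the root `p*` in Proposition 1: for `σ², η, P, h > 0`,
the function `G(p) = log₂(1 + p·h/σ²) − p·h/((σ²+p·h)·ln 2) − η·P·h²/((σ²+p·h)·ln 2)`
is strictly increasing on `[0, ∞)`, equals `−η·P·h²/(σ²·ln 2) < 0` at `p = 0`, tends to
`∞` as `p → ∞`, and has a unique positive root `p*`. -/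
theorem G_strictMono_and_unique_root (σ2 η P h : ℝ)
    (hσ : 0 < σ2) (hη : 0 < η) (hP : 0 < P) (hh : 0 < h) :
    StrictMonoOn
        (fun p : ℝ => Real.logb 2 (1 + p * h / σ2) - p * h / ((σ2 + p * h) * Real.log 2)
          - η * P * h ^ 2 / ((σ2 + p * h) * Real.log 2)) (Set.Ici (0 : ℝ)) ∧
      (Real.logb 2 (1 + 0 * h / σ2) - 0 * h / ((σ2 + 0 * h) * Real.log 2)
          - η * P * h ^ 2 / ((σ2 + 0 * h) * Real.log 2)
        = -(η * P * h ^ 2 / (σ2 * Real.log 2))) ∧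
      (-(η * P * h ^ 2 / (σ2 * Real.log 2)) < 0) ∧
      Tendsto
        (fun p : ℝ => Real.logb 2 (1 + p * h / σ2) - p * h / ((σ2 + p * h) * Real.log 2)
          - η * P * h ^ 2 / ((σ2 + p * h) * Real.log 2)) atTop atTop ∧
      (∃! p : ℝ, 0 < p ∧
        Real.logb 2 (1 + p * h / σ2) - p * h / ((σ2 + p * h) * Real.log 2)
          - η * P * h ^ 2 / ((σ2 + p * h) * Real.log 2) = 0) := by
  have hmono := WPMEC.G_strictMonoOn (η := η) (P := P) hσ hh (mul_pos hη hP).le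
  have hneg : -(η * P * h ^ 2 / (σ2 * log 2)) < 0 := by
    have := log_pos one_lt_two
    exact neg_neg_of_pos (by positivity)
  have hroot := existsUnique_root_of_strictMonoOn hmono (WPMEC.continuousOn_G hσ hh)
    (WPMEC.G_zero.trans_lt hneg) (WPMEC.tendsto_G_atTop hσ hh)
  exact ⟨hmono, WPMEC.G_zero, hneg, WPMEC.tendsto_G_atTop hσ hh, hroot⟩
end

section
/- (Implicit differentiation of the root, equation (23)/(24)) Let σ², η, P > 0 and define G(p, h) = log₂(1 + p·h/σ²) − p·h/((σ² + p·h)·ln 2) − η·P·h²/((σ² + p·h)·ln 2). Let h₀ > 0 and let p : (0, ∞) → ℝ be a function that is differentiable at h₀ with p(h₀) ≥ 0 and satisfies G(p(h), h) = 0 for all h in a neighborhood of h₀. Then p′(h₀) = (η·P·(2σ² + h₀·p(h₀)) − p(h₀)²) / (h₀·(η·P·h₀ + p(h₀))). -/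
/-!
Multiplying `G` by `ln 2` and writing `u(h) = p(h)·h` gives
`ln 2 · G = ln(1 + u/σ²) − (u + ηP·h²)/(σ² + u)`, whose derivative along the root curve is
`((u + ηP·h²)·u′ − 2ηP·h·(σ² + u))/(σ² + u)²`. Since `G(p(h), h)` vanishes near `h₀`,
this derivative is zero, and solving the resulting linear equation in
`u′ = p′(h₀)·h₀ + p(h₀)` gives the formula.
-/

open Real Filter Topology

theorem hasDerivAt_log_one_add_div_sub_div {u : ℝ → ℝ} {u' σ2 c h : ℝ}
    (hu : HasDerivAt u u' h) (hσ : 0 < σ2) (hpos : 0 < σ2 + u h) :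
    HasDerivAt (fun x => log (1 + u x / σ2) - (u x + c * x ^ 2) / (σ2 + u x))
      (((u h + c * h ^ 2) * u' - 2 * c * h * (σ2 + u h)) / (σ2 + u h) ^ 2) h := by
  have hlog_arg : 1 + u h / σ2 ≠ 0 := by
    rw [one_add_div hσ.ne']
    exact (div_pos hpos hσ).ne'
  have hlog := ((hu.div_const σ2).const_add 1).log hlog_arg
  have hquot := (hu.add ((hasDerivAt_pow 2 h).const_mul c)).div (hu.const_add σ2) hpos.ne'
  refine (hlog.sub hquot).congr_deriv ?_
  rw [one_add_div hσ.ne', Pi.add_apply]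
  field_simp
  ring

theorem HasDerivAt.eq_zero_of_eventuallyEq_zero {f : ℝ → ℝ} {f' x : ℝ}
    (hf : HasDerivAt f f' x) (hzero : f =ᶠ[𝓝 x] 0) : f' = 0 :=
  hf.unique ((hasDerivAt_const x 0).congr_of_eventuallyEq hzero)

theorem eq_div_of_linear_relation {σ2 c h p p' : ℝ} (hh : 0 < h) (hc : 0 < c) (hp : 0 ≤ p)
    (heq : (p * h + c * h ^ 2) * (p' * h + p) = 2 * c * h * (σ2 + p * h)) :
    p' = (c * (2 * σ2 + h * p) - p ^ 2) / (h * (c * h + p)) := by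
  rw [eq_div_iff (by positivity)]
  apply mul_left_cancel₀ hh.ne'
  linear_combination heq

namespace WirelessPoweredMEC

noncomputable def G (σ2 η P p h : ℝ) : ℝ :=
  logb 2 (1 + p * h / σ2) - p * h / ((σ2 + p * h) * log 2)
    - η * P * h ^ 2 / ((σ2 + p * h) * log 2)

theorem log_two_mul_G (σ2 η P p h : ℝ) :
    log 2 * G σ2 η P p h = log (1 + p * h / σ2) - (p * h + η * P * h ^ 2) / (σ2 + p * h) := by
  have hln2 : log 2 ≠ 0 := (log_pos one_lt_two).ne'
  unfold G logb
  field_simp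
  ring

end WirelessPoweredMEC

open WirelessPoweredMEC in
/-- Implicit differentiation of the root (equations (23)/(24)): if `p(h)` is
differentiable at `h₀ > 0`, nonnegative there, and satisfies `G(p(h), h) = 0` for all
`h` in a neighborhood of `h₀`, where
`G(p,h) = log₂(1 + p·h/σ²) − p·h/((σ²+p·h)·ln 2) − η·P·h²/((σ²+p·h)·ln 2)`, then
`p′(h₀) = (η·P·(2σ² + h₀·p(h₀)) − p(h₀)²)/(h₀·(η·P·h₀ + p(h₀)))`. -/
theorem implicit_derivative_of_root (σ2 η P : ℝ)
    (hσ : 0 < σ2) (hη : 0 < η) (hP : 0 < P)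
    (h₀ : ℝ) (hh₀ : 0 < h₀) (p : ℝ → ℝ)
    (hdiff : DifferentiableAt ℝ p h₀) (hp0 : 0 ≤ p h₀)
    (hroot : ∀ᶠ h in nhds h₀,
      Real.logb 2 (1 + p h * h / σ2) - p h * h / ((σ2 + p h * h) * Real.log 2)
        - η * P * h ^ 2 / ((σ2 + p h * h) * Real.log 2) = 0) :
    deriv p h₀ =
      (η * P * (2 * σ2 + h₀ * p h₀) - (p h₀) ^ 2) / (h₀ * (η * P * h₀ + p h₀)) := by
  have hpos : 0 < σ2 + p h₀ * h₀ := by positivity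
  have hu : HasDerivAt (fun h => p h * h) (deriv p h₀ * h₀ + p h₀) h₀ :=
    (hdiff.hasDerivAt.mul (hasDerivAt_id' h₀)).congr_deriv (by rw [mul_one])
  have hzero : (fun h => log (1 + p h * h / σ2)
      - (p h * h + η * P * h ^ 2) / (σ2 + p h * h)) =ᶠ[𝓝 h₀] 0 := by
    filter_upwards [hroot] with h hh
    rw [Pi.zero_apply, ← log_two_mul_G]
    exact mul_eq_zero_of_right _ hh
  have hderiv := (hasDerivAt_log_one_add_div_sub_div (c := η * P) hu hσ hpos)
    |>.eq_zero_of_eventuallyEq_zero hzero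
  rw [div_eq_zero_iff, sub_eq_zero] at hderiv
  exact eq_div_of_linear_relation hh₀ (by positivity) hp0
    (hderiv.resolve_right (pow_ne_zero 2 hpos.ne'))
end

section
/- (Closed form for the logarithmic derivative of the threshold along the root) Let B, C, σ², γ, η, P > 0 and define G(p, h) = log₂(1 + p·h/σ²) − p·h/((σ² + p·h)·ln 2) − η·P·h²/((σ² + p·h)·ln 2). Let h₀ > 0 and let p : (0, ∞) → ℝ be differentiable at h₀ with p(h₀) ≥ 0 and G(p(h), h) = 0 for all h in a neighborhood of h₀. Define thre(h) = (γ/(η·h)) · ( ((σ² + p(h)·h)·ln 2) / (3·C·h·γ·B) )^{3/2}. Then p(h₀) + h₀·p′(h₀) = 2·η·P·(σ² + h₀·p(h₀))/(p(h₀) + η·P·h₀), and consequently the derivative of h ↦ ln(thre(h)) at h₀ equals 3·η·P/(p(h₀) + η·P·h₀) − 5/(2·h₀) = (η·P·h₀ − 5·p(h₀)) / (2·h₀·(p(h₀) + η·P·h₀)). -/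
/-!
Multiplying out the factor `1 / ln 2`, the root condition says that
`log (σ² + p(h) h) - log σ² = (p(h) h + η P h²) / (σ² + p(h) h)` near `h₀`. Differentiating this
identity at `h₀` gives `(p(h₀) h₀ + η P h₀²) (p h)'(h₀) = 2 η P h₀ (σ² + p(h₀) h₀)`, which is the
first formula since `(p h)'(h₀) = p(h₀) + h₀ p'(h₀)`. On the other hand
`ln thre(h) = (3/2) ln (σ² + p(h) h) - (5/2) ln h + const`, so its derivative at `h₀` is
`(3/2) (p h)'(h₀) / (σ² + p(h₀) h₀) - 5 / (2 h₀)`, and the first formula turns this into the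
closed form.
-/

open Real Filter Topology

theorem logb_one_add_div_sub_div_sub_div {σ2 x : ℝ} (hσ : σ2 ≠ 0) (hx : σ2 + x ≠ 0) (c : ℝ) :
    logb 2 (1 + x / σ2) - x / ((σ2 + x) * log 2) - c / ((σ2 + x) * log 2)
      = (log (σ2 + x) - log σ2 - (x + c) / (σ2 + x)) / log 2 := by
  rw [logb, show 1 + x / σ2 = (σ2 + x) / σ2 by field_simp, log_div hx hσ]
  field_simp
  ring

theorem mul_deriv_eq_of_eventually_log_sub_div_eq_zero {u q : ℝ → ℝ} {u' q' c x : ℝ}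
    (hS : c + u x ≠ 0) (hu : HasDerivAt u u' x) (hq : HasDerivAt q q' x)
    (h : ∀ᶠ y in 𝓝 x, log (c + u y) - log c - (u y + q y) / (c + u y) = 0) :
    (u x + q x) * u' = q' * (c + u x) := by
  have hS' : HasDerivAt (fun y => c + u y) u' x := hu.const_add c
  have hF := ((hS'.log hS).sub_const (log c)).sub ((hu.add hq).div hS' hS)
  have hF0 := hF.unique ((hasDerivAt_const x (0 : ℝ)).congr_of_eventuallyEq h)
  field_simp at hF0
  simp only [Pi.add_apply] at hF0
  linear_combination hF0

theorem log_threshold_eq {B C γ η S h : ℝ} (hB : 0 < B) (hC : 0 < C) (hγ : 0 < γ)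
    (hη : 0 < η) (hS : 0 < S) (hh : 0 < h) :
    log (γ / (η * h) * (S * log 2 / (3 * C * h * γ * B)) ^ ((3 : ℝ) / 2))
      = 3 / 2 * log S - 5 / 2 * log h
        + (log γ - log η + 3 / 2 * (log (log 2) - log (3 * C * γ * B))) := by
  have hln2 : 0 < log 2 := log_pos one_lt_two
  rw [log_mul (by positivity) (by positivity), log_rpow (by positivity),
    log_div (by positivity) (by positivity), log_mul (by positivity) (by positivity),
    log_div (by positivity) (by positivity), log_mul (by positivity) (by positivity),
    show 3 * C * h * γ * B = 3 * C * γ * B * h by ring,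
    log_mul (by positivity) (by positivity)]
  ring

theorem hasDerivAt_log_threshold {B C γ η h₀ S' : ℝ} {S : ℝ → ℝ} (hB : 0 < B) (hC : 0 < C)
    (hγ : 0 < γ) (hη : 0 < η) (hh₀ : 0 < h₀) (hS : HasDerivAt S S' h₀)
    (hS_pos : ∀ᶠ h in 𝓝 h₀, 0 < S h) :
    HasDerivAt (fun h => log (γ / (η * h) * (S h * log 2 / (3 * C * h * γ * B)) ^ ((3 : ℝ) / 2)))
      (3 / 2 * (S' / S h₀) - 5 / 2 * h₀⁻¹) h₀ := by
  have hlog := ((((hS.log hS_pos.self_of_nhds.ne').const_mul (3 / 2)).sub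
    ((hasDerivAt_log hh₀.ne').const_mul (5 / 2))).add_const
    (log γ - log η + 3 / 2 * (log (log 2) - log (3 * C * γ * B))))
  refine hlog.congr_of_eventuallyEq ?_
  filter_upwards [hS_pos, eventually_gt_nhds hh₀] with h hSh hh
  exact log_threshold_eq hB hC hγ hη hSh hh

/-- Closed form for the logarithmic derivative of the threshold along the root: if
`p(h)` is differentiable at `h₀ > 0`, nonnegative there, and satisfies `G(p(h), h) = 0`
near `h₀`, where
`G(p,h) = log₂(1 + p·h/σ²) − p·h/((σ²+p·h)·ln 2) − η·P·h²/((σ²+p·h)·ln 2)`, and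
`thre(h) = (γ/(η·h)) · (((σ² + p(h)·h)·ln 2)/(3·C·h·γ·B))^{3/2}`, then
`p(h₀) + h₀·p′(h₀) = 2·η·P·(σ² + h₀·p(h₀))/(p(h₀) + η·P·h₀)` and the derivative of
`h ↦ ln(thre(h))` at `h₀` equals `3·η·P/(p(h₀) + η·P·h₀) − 5/(2·h₀)`, which equals
`(η·P·h₀ − 5·p(h₀))/(2·h₀·(p(h₀) + η·P·h₀))`. -/
theorem log_threshold_derivative_closed_form (B C σ2 γ η P : ℝ)
    (hB : 0 < B) (hC : 0 < C) (hσ : 0 < σ2) (hγ : 0 < γ) (hη : 0 < η) (hP : 0 < P)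
    (h₀ : ℝ) (hh₀ : 0 < h₀) (p : ℝ → ℝ)
    (hdiff : DifferentiableAt ℝ p h₀) (hp0 : 0 ≤ p h₀)
    (hroot : ∀ᶠ h in nhds h₀,
      Real.logb 2 (1 + p h * h / σ2) - p h * h / ((σ2 + p h * h) * Real.log 2)
        - η * P * h ^ 2 / ((σ2 + p h * h) * Real.log 2) = 0) :
    p h₀ + h₀ * deriv p h₀ = 2 * η * P * (σ2 + h₀ * p h₀) / (p h₀ + η * P * h₀) ∧
    deriv (fun h : ℝ => Real.log ((γ / (η * h)) *
        (((σ2 + p h * h) * Real.log 2) / (3 * C * h * γ * B)) ^ ((3 : ℝ) / 2))) h₀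
      = 3 * η * P / (p h₀ + η * P * h₀) - 5 / (2 * h₀) ∧
    3 * η * P / (p h₀ + η * P * h₀) - 5 / (2 * h₀)
      = (η * P * h₀ - 5 * p h₀) / (2 * h₀ * (p h₀ + η * P * h₀)) := by
  have hS₀ : 0 < σ2 + p h₀ * h₀ := by positivity
  have hpη : 0 < p h₀ + η * P * h₀ := by positivity
  have hu : HasDerivAt (fun h => p h * h) (p h₀ + h₀ * deriv p h₀) h₀ :=
    (hdiff.hasDerivAt.mul (hasDerivAt_id' h₀)).congr_deriv (by ring)
  have hS : HasDerivAt (fun h => σ2 + p h * h) (p h₀ + h₀ * deriv p h₀) h₀ := hu.const_add σ2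
  have hS_pos : ∀ᶠ h in 𝓝 h₀, 0 < σ2 + p h * h :=
    hS.continuousAt.eventually (eventually_gt_nhds hS₀)
  have hq : HasDerivAt (fun h => η * P * h ^ 2) (η * P * (2 * h₀)) h₀ := by
    simpa using (hasDerivAt_pow 2 h₀).const_mul (η * P)
  have hG : ∀ᶠ h in 𝓝 h₀,
      log (σ2 + p h * h) - log σ2 - (p h * h + η * P * h ^ 2) / (σ2 + p h * h) = 0 := by
    filter_upwards [hroot, hS_pos] with h hroot_h hSh
    rwa [logb_one_add_div_sub_div_sub_div hσ.ne' hSh.ne', div_eq_zero_iff,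
      or_iff_left (log_pos one_lt_two).ne'] at hroot_h
  have hrel :=
    mul_deriv_eq_of_eventually_log_sub_div_eq_zero (u := fun h => p h * h) hS₀.ne' hu hq hG
  have hslope : p h₀ + h₀ * deriv p h₀ = 2 * η * P * (σ2 + h₀ * p h₀) / (p h₀ + η * P * h₀) := by
    rw [eq_div_iff hpη.ne']
    refine mul_left_cancel₀ hh₀.ne' ?_
    linear_combination hrel
  refine ⟨hslope, ?_, by field_simp; ring⟩
  rw [(hasDerivAt_log_threshold hB hC hγ hη hh₀ hS hS_pos).deriv, hslope]
  field_simp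
end

section
/- (Quantitative form of Proposition 2: the activation threshold decreases in the channel gain) Let B, C, σ², γ, η, P > 0 and define G(p, h) = log₂(1 + p·h/σ²) − p·h/((σ² + p·h)·ln 2) − η·P·h²/((σ² + p·h)·ln 2). Let h₀ > 0 and let p : (0, ∞) → ℝ be differentiable at h₀ with p(h₀) ≥ 0 and G(p(h), h) = 0 for all h near h₀, and define thre(h) = (γ/(η·h)) · ( ((σ² + p(h)·h)·ln 2) / (3·C·h·γ·B) )^{3/2}. If η·P·h₀ < 5·p(h₀), then the derivative of thre at h₀ is strictly negative; in particular thre is strictly decreasing in the channel power gain at h₀. -/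
/-!
Write `u(h) = σ² + p(h)·h`. Multiplied by `ln 2`, the root equation reads
`log u + (σ² − ηPh²)/u = log σ² + 1`; differentiating it at `h₀` gives
`u'·(p·h + ηPh²) = 2ηPh·u`. Up to a positive constant, `thre(h) = u^{3/2} h^{-5/2}`, whose
derivative has the sign of `3u'h − 5u`, and by the relation for `u'` this is negative exactly
when `ηPh₀ < 5p(h₀)`.
-/

open Filter Topology Real

theorem log_add_div_eq_of_logb_sub_div_sub_div_eq_zero {σ q t : ℝ} (hσ : 0 < σ)
    (hq : 0 < σ + q)
    (h : logb 2 (1 + q / σ) - q / ((σ + q) * log 2) - t / ((σ + q) * log 2) = 0) :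
    log (σ + q) + (σ - t) / (σ + q) = log σ + 1 := by
  have hlog2 : 0 < log 2 := log_pos one_lt_two
  rw [logb, show 1 + q / σ = (σ + q) / σ by field_simp, log_div hq.ne' hσ.ne'] at h
  field_simp at h ⊢
  linear_combination h

theorem HasDerivAt.mul_eq_of_log_add_div_eventually_eq {u : ℝ → ℝ} {u' x σ a c : ℝ}
    (hu : HasDerivAt u u' x) (hx : 0 < u x)
    (hconst : ∀ᶠ h in 𝓝 x, Real.log (u h) + (σ - a * h ^ 2) / u h = c) :
    u' * (u x - σ + a * x ^ 2) = 2 * a * x * u x := by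
  have hF : HasDerivAt (fun h => Real.log (u h) + (σ - a * h ^ 2) / u h)
      (u' / u x + ((-(a * (2 * x))) * u x - (σ - a * x ^ 2) * u') / u x ^ 2) x := by
    refine (hu.log hx.ne').add (HasDerivAt.div ?_ hu hx.ne')
    simpa using ((hasDerivAt_pow 2 x).const_mul a).const_sub σ
  have hzero := hF.unique ((hasDerivAt_const x c).congr_of_eventuallyEq hconst)
  field_simp at hzero
  linear_combination hzero

theorem hasDerivAt_div_mul_div_rpow {u : ℝ → ℝ} {u' x k c r : ℝ}
    (hu : HasDerivAt u u' x) (hw : 0 < c * u x / x) :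
    HasDerivAt (fun h => k / h * (c * u h / h) ^ r)
      (k * c * (c * u x / x) ^ (r - 1) / x ^ 3 * (r * u' * x - (r + 1) * u x)) x := by
  have hx : x ≠ 0 := by rintro rfl; simp at hw
  obtain ⟨hc, hux⟩ := mul_ne_zero_iff.mp (div_ne_zero_iff.mp hw.ne').1
  have hw' : HasDerivAt (fun h => c * u h / h) ((c * u' * x - c * u x * 1) / x ^ 2) x :=
    (hu.const_mul c).div (hasDerivAt_id x) hx
  have hk : HasDerivAt (fun h : ℝ => k / h) (-(k / x ^ 2)) x := by
    simpa [div_eq_mul_inv] using (hasDerivAt_inv hx).const_mul k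
  refine (hk.mul (hw'.rpow_const (Or.inl hw.ne'))).congr_deriv ?_
  rw [rpow_sub hw, rpow_one]
  field_simp
  ring

/-- Quantitative form of Proposition 2: along the root `p(h)` of `G(p,h) = 0`, where
`G(p,h) = log₂(1 + p·h/σ²) − p·h/((σ²+p·h)·ln 2) − η·P·h²/((σ²+p·h)·ln 2)`, the
offloading-activation threshold
`thre(h) = (γ/(η·h)) · (((σ² + p(h)·h)·ln 2)/(3·C·h·γ·B))^{3/2}` has strictly negative
derivative at `h₀` whenever `η·P·h₀ < 5·p(h₀)`; i.e. `thre` is strictly decreasing in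
the channel power gain at `h₀`. -/
theorem threshold_strictly_decreasing (B C σ2 γ η P : ℝ)
    (hB : 0 < B) (hC : 0 < C) (hσ : 0 < σ2) (hγ : 0 < γ) (hη : 0 < η) (hP : 0 < P)
    (h₀ : ℝ) (hh₀ : 0 < h₀) (p : ℝ → ℝ)
    (hdiff : DifferentiableAt ℝ p h₀) (hp0 : 0 ≤ p h₀)
    (hroot : ∀ᶠ h in nhds h₀,
      Real.logb 2 (1 + p h * h / σ2) - p h * h / ((σ2 + p h * h) * Real.log 2)
        - η * P * h ^ 2 / ((σ2 + p h * h) * Real.log 2) = 0)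
    (hcond : η * P * h₀ < 5 * p h₀) :
    deriv (fun h : ℝ => (γ / (η * h)) *
        (((σ2 + p h * h) * Real.log 2) / (3 * C * h * γ * B)) ^ ((3 : ℝ) / 2)) h₀
      < 0 := by
  set u : ℝ → ℝ := fun h => σ2 + p h * h
  set u' := deriv p h₀ * h₀ + p h₀
  have hu : HasDerivAt u u' h₀ :=
    ((hdiff.hasDerivAt.mul (hasDerivAt_id h₀)).const_add σ2).congr_deriv (by simp [u'])
  have hu₀ : 0 < u h₀ := by positivity
  have hlog : ∀ᶠ h in 𝓝 h₀, Real.log (u h) + (σ2 - η * P * h ^ 2) / u h = Real.log σ2 + 1 := by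
    filter_upwards [hroot, hu.continuousAt.tendsto.eventually_const_lt hu₀] with h hG hpos
    exact log_add_div_eq_of_logb_sub_div_sub_div_eq_zero hσ hpos hG
  have hrel := hu.mul_eq_of_log_add_div_eventually_eq hu₀ hlog
  have hslope : 3 / 2 * u' * h₀ - (3 / 2 + 1) * u h₀ < 0 := by
    have hA : 0 < p h₀ * h₀ + η * P * h₀ ^ 2 := by positivity
    nlinarith [mul_pos (mul_pos hu₀ hh₀) (sub_pos.mpr hcond)]
  set c := Real.log 2 / (3 * C * γ * B)
  have hc : 0 < c := by positivity
  have hw : 0 < c * u h₀ / h₀ := by positivity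
  have hthre : (fun h : ℝ => (γ / (η * h)) *
      (((σ2 + p h * h) * Real.log 2) / (3 * C * h * γ * B)) ^ ((3 : ℝ) / 2)) =
      fun h => γ / η / h * (c * u h / h) ^ ((3 : ℝ) / 2) := by
    funext h
    rw [div_div]
    congr 2
    ring
  rw [hthre, (hasDerivAt_div_mul_div_rpow hu hw).deriv]
  exact mul_neg_of_pos_of_neg (by positivity) hslope
end

section
/- (Proposition 1: threshold-based uplink-offloading activation condition) Let B, T, C, σ², γ, η, P > 0 and let h > 0 be the effective channel power gain. Consider the single-user problem: maximize B·τ₁·log₂(1 + e·h/(τ₁·σ²)) + T·f/C over nonnegative reals τ₀, τ₁, e, f with τ₀ + τ₁ ≤ T and e + T·γ·f³ ≤ τ₀·η·P·h (with the convention that τ₁·log₂(1 + e·h/(τ₁·σ²)) = 0 when τ₁ = 0). Let V be its optimal value and let V_loc = (T/C)·(η·P·h/γ)^{1/3} be the optimal value under the restriction e = 0 (local computing only). Then V > V_loc (i.e., uplink offloading is activated at the optimum) if and only if P > thre(h), where thre(h) = (γ/(η·h)) · ( ((σ² + p*·h)·ln 2) / (3·C·h·γ·B) )^{3/2} and p*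 is the unique nonnegative solution of G(p) = log₂(1 + p·h/σ²) − p·h/((σ² + p·h)·ln 2) − η·P·h²/((σ² + p·h)·ln 2) = 0. -/
open Real Filter Topology

/-!
Put `b = (η P h / γ)^(1/3)`, so that `V_loc = T b / C` is reached by spending all harvested energy
on local computing. Diverting energy `E` from local computing (uplink energy `e`, or harvesting
time `τ₁` given up for offloading, worth `τ₁ η P h`) costs at most `E / (3 C γ b²)` of local rate,
by the tangent of `f ↦ f³` at `b`. It gains at most `m E` of offloading rate, `m` being the slope
of `p ↦ B log₂(1 + p h / σ²)` at `p*`: the rate is concave, so it lies below its tangent at `p*`,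
and the equation `G(p*) = 0` says exactly that this tangent passes through `(-η P h, 0)`.
Hence `V = V_loc` when `3 C γ b² m ≤ 1`. When `3 C γ b² m > 1`, offloading at power `p*` for a
short time while lowering `f` slightly below `b` beats `V_loc`. Finally, `P > thre(h)` is a
rewriting of `3 C γ b² m > 1`.
-/

noncomputable def offloadSlope (B h σ2 p : ℝ) : ℝ :=
  B * h / ((σ2 + p * h) * log 2)

/-- At `τ₁ = 0` the offloading term is `0` because Lean's division by zero gives `0`. -/
def computationRates (B T C σ2 γ η P h : ℝ) : Set ℝ :=
  {r | ∃ τ₀ τ₁ e f : ℝ, 0 ≤ τ₀ ∧ 0 ≤ τ₁ ∧ 0 ≤ e ∧ 0 ≤ f ∧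
    τ₀ + τ₁ ≤ T ∧ e + T * γ * f ^ 3 ≤ τ₀ * η * P * h ∧
    r = B * τ₁ * Real.logb 2 (1 + e * h / (τ₁ * σ2)) + T * f / C}

theorem log_one_add_le_tangent {x p : ℝ} (hx : -1 < x) (hp : -1 < p) :
    log (1 + x) ≤ log (1 + p) + (x - p) / (1 + p) := by
  have hx' : 0 < 1 + x := by linarith
  have hp' : 0 < 1 + p := by linarith
  have h := log_le_sub_one_of_pos (div_pos hx' hp')
  rw [log_div hx'.ne' hp'.ne'] at h
  have : (1 + x) / (1 + p) - 1 = (x - p) / (1 + p) := by field_simp; ring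
  linarith

theorem mul_logb_one_add_le_tangent {B h σ2 τ e p : ℝ} (hB : 0 ≤ B) (hh : 0 < h)
    (hσ : 0 < σ2) (hτ : 0 ≤ τ) (he : 0 ≤ e) (hp : 0 ≤ p) :
    B * τ * logb 2 (1 + e * h / (τ * σ2)) ≤
      τ * (B * logb 2 (1 + p * h / σ2)) + (e - τ * p) * offloadSlope B h σ2 p := by
  rcases hτ.eq_or_lt with rfl | hτ
  · simp only [offloadSlope, mul_zero, zero_mul, sub_zero, zero_add]
    positivity
  have tangent := log_one_add_le_tangent (x := e * h / (τ * σ2)) (p := p * h / σ2)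
    (by linarith [show 0 ≤ e * h / (τ * σ2) by positivity])
    (by linarith [show 0 ≤ p * h / σ2 by positivity])
  calc B * τ * logb 2 (1 + e * h / (τ * σ2))
      = B * τ / log 2 * log (1 + e * h / (τ * σ2)) := by rw [logb]; ring
    _ ≤ B * τ / log 2 * (log (1 + p * h / σ2)
          + (e * h / (τ * σ2) - p * h / σ2) / (1 + p * h / σ2)) := by gcongr
    _ = _ := by rw [logb, offloadSlope]; field_simp

theorem rate_add_div_le_of_cube_add_le {T C γ b f E : ℝ} (hT : 0 < T) (hC : 0 < C)
    (hγ : 0 < γ) (hb : 0 < b) (hf : 0 ≤ f) (hE : T * γ * f ^ 3 + E ≤ T * γ * b ^ 3) :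
    T * f / C + E / (3 * C * γ * b ^ 2) ≤ T / C * b := by
  have tangent : 3 * b ^ 2 * f ≤ 2 * b ^ 3 + f ^ 3 := by
    nlinarith [mul_nonneg (sq_nonneg (f - b)) (by linarith : 0 ≤ f + 2 * b)]
  calc T * f / C + E / (3 * C * γ * b ^ 2)
      = (T * γ * (3 * b ^ 2 * f) + E) / (3 * C * γ * b ^ 2) := by field_simp
    _ ≤ 3 * T * γ * b ^ 3 / (3 * C * γ * b ^ 2) := by
        gcongr
        nlinarith [mul_le_mul_of_nonneg_left tangent (by positivity : 0 ≤ T * γ)]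
    _ = T / C * b := by field_simp

section Rates

variable {B T C σ2 γ η P h p b : ℝ}

theorem exists_budget_of_mem_computationRates (hB : 0 ≤ B) (hT : 0 < T) (hC : 0 < C)
    (hσ : 0 < σ2) (hγ : 0 < γ) (hh : 0 < h) (hp : 0 ≤ p) (hb : 0 < b)
    (hγb : γ * b ^ 3 = η * P * h)
    (hroot : B * logb 2 (1 + p * h / σ2) = (p + η * P * h) * offloadSlope B h σ2 p)
    {r : ℝ} (hr : r ∈ computationRates B T C σ2 γ η P h) :
    ∃ E, 0 ≤ E ∧ E ≤ T * (η * P * h) ∧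
      r + E / (3 * C * γ * b ^ 2) ≤ T / C * b + offloadSlope B h σ2 p * E := by
  obtain ⟨τ₀, τ₁, e, f, hτ₀, hτ₁, he, hf, hτ, hbudget, rfl⟩ := hr
  have hq : 0 < η * P * h := hγb ▸ by positivity
  have hτ₀q : τ₀ * η * P * h ≤ (T - τ₁) * (η * P * h) := by
    rw [show τ₀ * η * P * h = τ₀ * (η * P * h) by ring]
    gcongr
    linarith
  have hTb : T * γ * b ^ 3 = T * (η * P * h) := by rw [← hγb]; ring
  have hoffload := mul_logb_one_add_le_tangent (B := B) hB hh hσ hτ₁ he hp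
  have hlocal := rate_add_div_le_of_cube_add_le hT hC hγ hb hf
    (E := e + τ₁ * (η * P * h)) (by linarith)
  have hf3 : 0 ≤ T * γ * f ^ 3 := by positivity
  refine ⟨e + τ₁ * (η * P * h), by positivity, by linarith, ?_⟩
  rw [hroot] at hoffload
  linarith

theorem le_of_mem_computationRates (hB : 0 ≤ B) (hT : 0 < T) (hC : 0 < C)
    (hσ : 0 < σ2) (hγ : 0 < γ) (hh : 0 < h) (hp : 0 ≤ p) (hb : 0 < b)
    (hγb : γ * b ^ 3 = η * P * h)
    (hroot : B * logb 2 (1 + p * h / σ2) = (p + η * P * h) * offloadSlope B h σ2 p)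
    {r : ℝ} (hr : r ∈ computationRates B T C σ2 γ η P h) :
    r ≤ T / C * b +
      max (offloadSlope B h σ2 p - 1 / (3 * C * γ * b ^ 2)) 0 * (T * (η * P * h)) := by
  obtain ⟨E, hE0, hET, hrE⟩ :=
    exists_budget_of_mem_computationRates hB hT hC hσ hγ hh hp hb hγb hroot hr
  have hgain : (offloadSlope B h σ2 p - 1 / (3 * C * γ * b ^ 2)) * E
      ≤ max (offloadSlope B h σ2 p - 1 / (3 * C * γ * b ^ 2)) 0 * (T * (η * P * h)) :=
    calc _ ≤ max (offloadSlope B h σ2 p - 1 / (3 * C * γ * b ^ 2)) 0 * E :=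
          mul_le_mul_of_nonneg_right (le_max_left _ _) hE0
      _ ≤ _ := mul_le_mul_of_nonneg_left hET (le_max_right _ _)
  have : E / (3 * C * γ * b ^ 2) = 1 / (3 * C * γ * b ^ 2) * E := by ring
  linarith

theorem exists_nonneg_lt_one_lt_mul_sq_add_mul_add_sq {k b : ℝ} (hb : 0 < b)
    (hkb : 1 < 3 * k * b ^ 2) : ∃ f, 0 ≤ f ∧ f < b ∧ 1 < k * (b ^ 2 + b * f + f ^ 2) := by
  have hlim : Tendsto (fun f => k * (b ^ 2 + b * f + f ^ 2)) (𝓝[<] b) (𝓝 (3 * k * b ^ 2)) := by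
    have hcont : Continuous (fun f => k * (b ^ 2 + b * f + f ^ 2)) := by fun_prop
    convert hcont.continuousAt.tendsto.mono_left nhdsWithin_le_nhds using 2
    ring
  have hnonneg : ∀ᶠ f in 𝓝[<] b, 0 ≤ f :=
    nhdsWithin_le_nhds (eventually_ge_nhds hb)
  have hlt : ∀ᶠ f in 𝓝[<] b, f < b := self_mem_nhdsWithin
  exact (hnonneg.and (hlt.and (hlim.eventually (lt_mem_nhds hkb)))).exists

theorem exists_mem_computationRates_gt (hT : 0 < T) (hC : 0 < C) (hγ : 0 < γ)
    (hp : 0 ≤ p) (hb : 0 < b) (hγb : γ * b ^ 3 = η * P * h)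
    (hroot : B * logb 2 (1 + p * h / σ2) = (p + η * P * h) * offloadSlope B h σ2 p)
    (hact : 1 < 3 * C * γ * b ^ 2 * offloadSlope B h σ2 p) :
    ∃ r ∈ computationRates B T C σ2 γ η P h, T / C * b < r := by
  set m := offloadSlope B h σ2 p
  obtain ⟨f, hf0, hfb, hf⟩ :=
    exists_nonneg_lt_one_lt_mul_sq_add_mul_add_sq (k := C * γ * m) hb (by linarith)
  have hTb : T * γ * b ^ 3 = T * (η * P * h) := by rw [← hγb]; ring
  have hc : 0 < p + η * P * h := by linarith [show 0 < γ * b ^ 3 by positivity]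
  set t := T * γ * (b ^ 3 - f ^ 3) / (p + η * P * h)
  have hspent : t * (p + η * P * h) = T * γ * (b ^ 3 - f ^ 3) := div_mul_cancel₀ _ hc.ne'
  have ht0 : 0 < t := by
    have : f ^ 3 < b ^ 3 := pow_lt_pow_left₀ hfb hf0 (by norm_num)
    exact div_pos (mul_pos (by positivity) (sub_pos.2 this)) hc
  have htT : t ≤ T := by
    rw [div_le_iff₀ hc]
    linarith [mul_nonneg hT.le hp, mul_nonneg (mul_nonneg hT.le hγ.le) (pow_nonneg hf0 3)]
  refine ⟨_, ⟨T - t, t, t * p, f, by linarith, ht0.le, by positivity, hf0, by linarith,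
    le_of_eq (by linear_combination hspent + T * hγb), rfl⟩, ?_⟩
  have hsnr : t * p * h / (t * σ2) = p * h / σ2 := by
    rw [mul_assoc, mul_div_mul_left _ _ ht0.ne']
  have hgap : 0 < T / C * (b - f) := mul_pos (by positivity) (sub_pos.2 hfb)
  calc T / C * b = T * f / C + T / C * (b - f) * 1 := by ring
    _ < T * f / C + T / C * (b - f) * (C * γ * m * (b ^ 2 + b * f + f ^ 2)) := by gcongr
    _ = t * (B * logb 2 (1 + p * h / σ2)) + T * f / C := by
        rw [hroot, ← mul_assoc t, hspent]; field_simp; ring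
    _ = B * t * logb 2 (1 + t * p * h / (t * σ2)) + T * f / C := by rw [hsnr]; ring

end Rates

theorem rpow_three_halves_lt_pow_three_iff {Q b : ℝ} (hQ : 0 ≤ Q) (hb : 0 ≤ b) :
    Q ^ ((3 : ℝ) / 2) < b ^ 3 ↔ Q < b ^ 2 := by
  have hb3 : b ^ 3 = (b ^ 2) ^ ((3 : ℝ) / 2) := by
    rw [← rpow_natCast b 2, ← rpow_mul hb, ← rpow_natCast]
    norm_num
  rw [hb3, rpow_lt_rpow_iff hQ (by positivity) (by norm_num)]

theorem threshold_lt_iff {B C σ2 γ η P h p b : ℝ} (hB : 0 < B) (hC : 0 < C) (hσ : 0 < σ2)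
    (hγ : 0 < γ) (hη : 0 < η) (hh : 0 < h) (hp : 0 ≤ p) (hb : 0 < b)
    (hγb : γ * b ^ 3 = η * P * h) :
    γ / (η * h) * ((σ2 + p * h) * log 2 / (3 * C * h * γ * B)) ^ ((3 : ℝ) / 2) < P ↔
      1 < 3 * C * γ * b ^ 2 * offloadSlope B h σ2 p := by
  have hX : 0 < (σ2 + p * h) * log 2 := by positivity
  have hP : P = γ / (η * h) * b ^ 3 := by field_simp; linear_combination -hγb
  rw [hP, mul_lt_mul_iff_right₀ (by positivity),
    rpow_three_halves_lt_pow_three_iff (by positivity) hb.le, div_lt_iff₀ (by positivity),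
    offloadSlope, ← mul_div_assoc, one_lt_div hX]
  constructor <;> intro <;> linarith

/-- Proposition 1: threshold-based uplink-offloading activation condition for the
single-user wireless-powered MEC problem. `V` is the optimal value of the problem
`max B·τ₁·log₂(1 + e·h/(τ₁·σ²)) + T·f/C` subject to `τ₀ + τ₁ ≤ T` and
`e + T·γ·f³ ≤ τ₀·η·P·h` over nonnegative `τ₀, τ₁, e, f` (in Lean, division by zero
gives `0`, so the expression automatically obeys the convention that the offloading
term vanishes when `τ₁ = 0`), and `V_loc = (T/C)·(η·P·h/γ)^{1/3}` is the optimal value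
with local computing only. Then `V > V_loc` iff `P > thre(h)`, where
`thre(h) = (γ/(η·h))·(((σ² + p*·h)·ln 2)/(3·C·h·γ·B))^{3/2}` and `p*` is the unique
nonnegative root of `G`. -/
theorem offloading_activation_condition (B T C σ2 γ η P h : ℝ)
    (hB : 0 < B) (hT : 0 < T) (hC : 0 < C) (hσ : 0 < σ2) (hγ : 0 < γ)
    (hη : 0 < η) (hP : 0 < P) (hh : 0 < h)
    (pstar : ℝ) (hpstar0 : 0 ≤ pstar)
    (hroot : Real.logb 2 (1 + pstar * h / σ2)
        - pstar * h / ((σ2 + pstar * h) * Real.log 2)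
        - η * P * h ^ 2 / ((σ2 + pstar * h) * Real.log 2) = 0) :
    sSup {r : ℝ | ∃ τ₀ τ₁ e f : ℝ, 0 ≤ τ₀ ∧ 0 ≤ τ₁ ∧ 0 ≤ e ∧ 0 ≤ f ∧
        τ₀ + τ₁ ≤ T ∧ e + T * γ * f ^ 3 ≤ τ₀ * η * P * h ∧
        r = B * τ₁ * Real.logb 2 (1 + e * h / (τ₁ * σ2)) + T * f / C}
      > (T / C) * (η * P * h / γ) ^ ((1 : ℝ) / 3)
    ↔ P > (γ / (η * h)) *
        (((σ2 + pstar * h) * Real.log 2) / (3 * C * h * γ * B)) ^ ((3 : ℝ) / 2) := by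
  have hq : 0 < η * P * h / γ := by positivity
  set b := (η * P * h / γ) ^ ((1 : ℝ) / 3)
  have hb : 0 < b := by positivity
  have hγb : γ * b ^ 3 = η * P * h := by
    rw [← rpow_natCast, ← rpow_mul hq.le]
    norm_num
    field_simp
  have hroot' : B * logb 2 (1 + pstar * h / σ2)
      = (pstar + η * P * h) * offloadSlope B h σ2 pstar := by
    rw [offloadSlope]
    linear_combination B * hroot
  have bound := fun r (hr : r ∈ computationRates B T C σ2 γ η P h) =>
    le_of_mem_computationRates hB.le hT hC hσ hγ hh hpstar0 hb hγb hroot' hr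
  change T / C * b < sSup (computationRates B T C σ2 γ η P h) ↔ _ < P
  rw [threshold_lt_iff hB hC hσ hγ hη hh hpstar0 hb hγb]
  constructor
  · contrapose!
    intro hnot
    have hgain : offloadSlope B h σ2 pstar - 1 / (3 * C * γ * b ^ 2) ≤ 0 := by
      rw [sub_nonpos, le_div_iff₀ (by positivity)]
      linarith
    refine Real.sSup_le (fun r hr => ?_) (by positivity)
    simpa only [max_eq_right hgain, zero_mul, add_zero] using bound r hr
  · intro hact
    obtain ⟨r, hr, hlt⟩ :=
      exists_mem_computationRates_gt hT hC hγ hpstar0 hb hγb hroot' hact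
    exact hlt.trans_le (le_csSup ⟨_, bound⟩ hr)
end
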